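/- arXiv:2106.07772 — 2 statements merged into one kernel-verified Lean document; each statement's English description precedes it below -/
import Mathlib

section
/- Let r ≥ 4 be even, k = (r−1)², and let G be a (K_{1,r}; k)-vertex stable graph of order r+k+1. Then |E(G)| ≥ (1/2)((r+k)² − 1), with equality exactly when G is the complete graph K_{r+k+1} minus a perfect matching. -/
/-- The star graph `K_{1,r}`: center `none`, leaves `some i`. -/
def starG (r : ℕ) : SimpleGraph (Option (Fin r)) where
  Adj a b := a ≠ b ∧ (a = none ∨ b = none)
  symm := ⟨fun a b h => ⟨h.1.symm, h.2.symm⟩⟩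
  loopless := ⟨fun a h => h.1 rfl⟩

/-- The join `K_{k+1} * \bar K_r`: clique part `Sum.inl`, independent part `Sum.inr`. -/
def joinKE (k r : ℕ) : SimpleGraph (Fin (k + 1) ⊕ Fin r) where
  Adj a b := a ≠ b ∧ (a.isLeft ∨ b.isLeft)
  symm := ⟨fun a b h => ⟨h.1.symm, h.2.symm⟩⟩
  loopless := ⟨fun a h => h.1 rfl⟩

/-- The complete graph on `n` vertices minus a perfect matching (vertices `2m`, `2m+1` paired). -/
def compMM (n : ℕ) : SimpleGraph (Fin n) where
  Adj i j := (i : ℕ) / 2 ≠ (j : ℕ) / 2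
  symm := ⟨fun i j h => h.symm⟩
  loopless := ⟨fun i h => h rfl⟩

/-- `G` contains a subgraph isomorphic to `H`. -/
def ContainsIso {α β : Type*} (H : SimpleGraph α) (G : SimpleGraph β) : Prop :=
  ∃ f : α → β, Function.Injective f ∧ ∀ a b, H.Adj a b → G.Adj (f a) (f b)

/-- `G` is `(H; k)`-vertex stable: after deleting any `k` vertices, a copy of `H` remains. -/
def VertexStable {α β : Type*} (H : SimpleGraph α) (k : ℕ) (G : SimpleGraph β) : Prop :=
  ∀ F : Finset β, F.card = k →
    ∃ f : α → β, Function.Injective f ∧ (∀ a, f a ∉ F) ∧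
      ∀ a b, H.Adj a b → G.Adj (f a) (f b)

/-! Write `H = Gᶜ` and `n = r + k + 1`. Deleting the `k` vertices outside an `(r + 1)`-set `S`
leaves a star spanning `S`, so `S` contains a vertex isolated in `H[S]`. If some vertex has
`H`-degree at least `2`, a path on three vertices through it can be grown two vertices at a time
inside the support of `H`; as `r + 1` is odd, the support therefore has at most `r` vertices and
`∑ deg_H ≤ r (r - 1) < n`. Otherwise `H` has maximum degree at most `1`, so `∑ deg_H ≤ n` with
equality iff `H` is a perfect matching. Hence `2 |E(G)| = n (n - 1) - ∑ deg_H ≥ n (n - 2)`.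
Finally, graphs whose complements are perfect matchings on equally many vertices are isomorphic,
since fixed-point-free involutions of a finite set are all conjugate. -/

open Finset

namespace Equiv.Perm

variable {α : Type*} [Fintype α] [DecidableEq α]

theorem cycleType_eq_replicate_two_of_involutive {σ : Perm α} (hσ : Function.Involutive σ)
    (hfix : ∀ x, σ x ≠ x) : σ.cycleType = Multiset.replicate (Fintype.card α / 2) 2 := by
  have hmem : ∀ n ∈ σ.cycleType, n = 2 := fun n hn =>
    le_antisymm (Nat.le_of_dvd two_pos ((dvd_of_mem_cycleType hn).trans
      (orderOf_dvd_of_pow_eq_one (by ext x; simp [sq, hσ x]))))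
      (two_le_of_mem_cycleType hn)
  have hsum : σ.cycleType.sum = Fintype.card α := by
    rw [sum_cycleType, ← card_univ]
    congr 1
    ext x
    simp [hfix x]
  rw [Multiset.eq_replicate_card.mpr hmem] at hsum ⊢
  simp only [Multiset.sum_replicate, smul_eq_mul] at hsum
  congr
  omega

theorem isConj_of_involutive {σ τ : Perm α} (hσ : Function.Involutive σ) (hσfix : ∀ x, σ x ≠ x)
    (hτ : Function.Involutive τ) (hτfix : ∀ x, τ x ≠ x) : IsConj σ τ := by
  rw [isConj_iff_cycleType_eq, cycleType_eq_replicate_two_of_involutive hσ hσfix,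
    cycleType_eq_replicate_two_of_involutive hτ hτfix]

end Equiv.Perm

namespace SimpleGraph

variable {V W : Type*} {G : SimpleGraph V} {G' : SimpleGraph W}

def Iso.compl (e : G ≃g G') : Gᶜ ≃g G'ᶜ :=
  ⟨e.toEquiv, by simp [e.injective.ne_iff, e.map_adj_iff]⟩

theorem nonempty_iso_compl_iff : Nonempty (Gᶜ ≃g G'ᶜ) ↔ Nonempty (G ≃g G') :=
  ⟨fun ⟨e⟩ => ⟨compl_compl G ▸ compl_compl G' ▸ e.compl⟩, fun ⟨e⟩ => ⟨e.compl⟩⟩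

theorem IsRegularOfDegree.exists_involutive_adj_iff [G.LocallyFinite]
    (h : G.IsRegularOfDegree 1) :
    ∃ σ : Equiv.Perm V, Function.Involutive σ ∧ (∀ v, σ v ≠ v) ∧ ∀ v w, G.Adj v w ↔ σ v = w := by
  choose σ hσ hσuniq using fun v => degree_eq_one_iff_existsUnique_adj.mp (h.degree_eq v)
  have hadj : ∀ v w, G.Adj v w ↔ σ v = w := fun v w => ⟨fun h => (hσuniq v w h).symm, (· ▸ hσ v)⟩
  have hinv : Function.Involutive σ := fun v => (hadj _ _).mp (hσ v).symm
  exact ⟨hinv.toPerm, hinv, fun v => (hσ v).ne', hadj⟩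

theorem nonempty_iso_of_isRegularOfDegree_one [Fintype V] [Fintype W] [G.LocallyFinite]
    [G'.LocallyFinite] (hcard : Fintype.card V = Fintype.card W)
    (h : G.IsRegularOfDegree 1) (h' : G'.IsRegularOfDegree 1) : Nonempty (G ≃g G') := by
  classical
  obtain ⟨σ, hσ, hσfix, hσadj⟩ := h.exists_involutive_adj_iff
  obtain ⟨τ, hτ, hτfix, hτadj⟩ := h'.exists_involutive_adj_iff
  let g := Fintype.equivOfCardEq hcard
  obtain ⟨c, hc⟩ := isConj_iff.mp (Equiv.Perm.isConj_of_involutive (σ := g.permCongr σ)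
    (fun w => by simp [hσ _]) (fun w => by simpa [← g.eq_symm_apply] using hσfix _) hτ hτfix)
  refine ⟨⟨g.trans c, fun {v w} => ?_⟩⟩
  have hcg : ∀ v, c (g (σ v)) = τ (c (g v)) := fun v => by
    rw [← hc]; simp
  rw [hσadj, hτadj, Equiv.trans_apply, Equiv.trans_apply, ← hcg, c.injective.eq_iff,
    g.injective.eq_iff]

variable {H : SimpleGraph V}

def InducesNoIsolated (H : SimpleGraph V) (S : Finset V) : Prop :=
  ∀ v ∈ S, ∃ w ∈ S, H.Adj v w

namespace InducesNoIsolated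

variable {S : Finset V} {x y : V}

theorem subset_support [Fintype V] [DecidableRel H.Adj] (hS : H.InducesNoIsolated S) :
    S ⊆ H.support.toFinset := fun v hv =>
  let ⟨_, _, hvw⟩ := hS v hv; Set.mem_toFinset.mpr hvw.left_mem_support

variable [DecidableEq V]

theorem insert_of_adj (hS : H.InducesNoIsolated S) (hy : y ∈ S) (hxy : H.Adj x y) :
    H.InducesNoIsolated (insert x S) := by
  intro v hv
  rcases mem_insert.mp hv with rfl | hv
  · exact ⟨y, mem_insert_of_mem hy, hxy⟩
  · obtain ⟨w, hw, hvw⟩ := hS v hv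
    exact ⟨w, mem_insert_of_mem hw, hvw⟩

theorem insert_insert_of_adj (hS : H.InducesNoIsolated S) (hxy : H.Adj x y) :
    H.InducesNoIsolated (insert x (insert y S)) := by
  intro v hv
  simp only [mem_insert] at hv
  rcases hv with rfl | rfl | hv
  · exact ⟨y, by simp, hxy⟩
  · exact ⟨x, by simp, hxy.symm⟩
  · obtain ⟨w, hw, hvw⟩ := hS v hv
    exact ⟨w, by simp [hw], hvw⟩

variable [Fintype V] [DecidableRel H.Adj]

theorem exists_card_add_two (hS : H.InducesNoIsolated S)
    (hcard : #S + 2 ≤ #H.support.toFinset) :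
    ∃ T, #T = #S + 2 ∧ H.InducesNoIsolated T := by
  have hsdiff : 1 < #(H.support.toFinset \ S) := by
    rw [card_sdiff_of_subset hS.subset_support]; omega
  obtain ⟨x, hx, x', hx', hxx'⟩ := one_lt_card.mp hsdiff
  simp only [mem_sdiff, Set.mem_toFinset, mem_support] at hx hx'
  obtain ⟨⟨y, hxy⟩, hxS⟩ := hx
  obtain ⟨⟨y', hxy'⟩, hx'S⟩ := hx'
  by_cases hyS : y ∈ S
  · have hx'xS : x' ∉ insert x S := by simp [hxx'.symm, hx'S]
    by_cases hy' : y' ∈ insert x S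
    · refine ⟨insert x' (insert x S), ?_, (hS.insert_of_adj hyS hxy).insert_of_adj hy' hxy'⟩
      rw [card_insert_of_notMem hx'xS, card_insert_of_notMem hxS]
    · have hy'S : y' ∉ S := fun h => hy' (mem_insert_of_mem h)
      refine ⟨insert x' (insert y' S), ?_, hS.insert_insert_of_adj hxy'⟩
      rw [card_insert_of_notMem (by simp [hxy'.ne, hx'S]), card_insert_of_notMem hy'S]
  · refine ⟨insert x (insert y S), ?_, hS.insert_insert_of_adj hxy⟩
    rw [card_insert_of_notMem (by simp [hxy.ne, hxS]), card_insert_of_notMem hyS]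

end InducesNoIsolated

variable [DecidableEq V] [Fintype V] [DecidableRel H.Adj]

theorem exists_inducesNoIsolated_card_of_odd {v : V} (hv : 2 ≤ H.degree v) {m : ℕ} (hm : Odd m)
    (h3 : 3 ≤ m) (hmD : m ≤ #H.support.toFinset) : ∃ S, #S = m ∧ H.InducesNoIsolated S := by
  obtain ⟨j, rfl⟩ := hm
  induction j, (by omega : 1 ≤ j) using Nat.le_induction with
  | base =>
    obtain ⟨a, ha, b, hb, hab⟩ := one_lt_card.mp hv
    rw [mem_neighborFinset] at ha hb
    have hva : H.InducesNoIsolated {v, a} := by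
      simpa using InducesNoIsolated.insert_insert_of_adj (S := ∅) (by simp [InducesNoIsolated]) ha
    refine ⟨{b, v, a}, ?_, hva.insert_of_adj (by simp) hb.symm⟩
    rw [card_insert_of_notMem (by simp [hab.symm, hb.ne']), card_pair ha.ne]
    rfl
  | succ j hj ih =>
    obtain ⟨S, hS, hSno⟩ := ih (by omega) (by omega)
    obtain ⟨T, hT, hTno⟩ := hSno.exists_card_add_two (by omega)
    exact ⟨T, by omega, hTno⟩

theorem sum_degree_le_card_support_mul :
    ∑ v, H.degree v ≤ #H.support.toFinset * (#H.support.toFinset - 1) := by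
  have hdeg : ∀ v ∈ H.support.toFinset, H.degree v ≤ #H.support.toFinset - 1 := fun v hv => by
    rw [← card_erase_of_mem hv, ← card_neighborFinset_eq_degree]
    refine card_le_card fun w hw => ?_
    rw [mem_neighborFinset] at hw
    exact mem_erase.mpr ⟨hw.ne', Set.mem_toFinset.mpr hw.right_mem_support⟩
  rw [← sum_subset (subset_univ _) fun v _ hv =>
    (H.degree_eq_zero_iff_notMem_support v).mpr (Set.mem_toFinset.not.mp hv)]
  exact sum_le_card_nsmul _ _ _ hdeg

theorem sum_degree_lt_card_of_two_le_degree {m : ℕ} (hm : Odd m) (h3 : 3 ≤ m)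
    (hV : (m - 1) * (m - 2) < Fintype.card V)
    (hH : ∀ S : Finset V, #S = m → ¬ H.InducesNoIsolated S) {v : V} (hv : 2 ≤ H.degree v) :
    ∑ v, H.degree v < Fintype.card V := by
  have hD : #H.support.toFinset < m := by
    by_contra! hD
    obtain ⟨S, hS, hSno⟩ := exists_inducesNoIsolated_card_of_odd hv hm h3 hD
    exact hH S hS hSno
  calc ∑ v, H.degree v ≤ #H.support.toFinset * (#H.support.toFinset - 1) :=
        sum_degree_le_card_support_mul
    _ ≤ (m - 1) * (m - 2) := Nat.mul_le_mul (by omega) (by omega)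
    _ < Fintype.card V := hV

theorem sum_degree_le_card_of_forall_not_inducesNoIsolated {m : ℕ} (hm : Odd m) (h3 : 3 ≤ m)
    (hV : (m - 1) * (m - 2) < Fintype.card V)
    (hH : ∀ S : Finset V, #S = m → ¬ H.InducesNoIsolated S) :
    ∑ v, H.degree v ≤ Fintype.card V ∧
      (∑ v, H.degree v = Fintype.card V ↔ H.IsRegularOfDegree 1) := by
  have hreg : H.IsRegularOfDegree 1 → ∑ v, H.degree v = Fintype.card V := fun h => by
    simp [h.degree_eq]
  by_cases hle : ∀ v, H.degree v ≤ 1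
  · have hcard : ∑ _v : V, 1 = Fintype.card V := by simp
    refine ⟨hcard ▸ sum_le_sum fun v _ => hle v, fun h v => ?_, hreg⟩
    exact (sum_eq_sum_iff_of_le fun v _ => hle v).mp (h.trans hcard.symm) v (mem_univ v)
  · push Not at hle
    obtain ⟨v, hv⟩ := hle
    have hlt := sum_degree_lt_card_of_two_le_degree hm h3 hV hH hv
    exact ⟨hlt.le, ⟨fun h => absurd h hlt.ne, hreg⟩⟩

theorem sum_degree_add_sum_degree_compl [DecidableRel G.Adj] :
    ∑ v, G.degree v + ∑ v, Gᶜ.degree v = Fintype.card V * (Fintype.card V - 1) := by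
  rw [← sum_add_distrib, sum_congr rfl fun v _ => ?_, sum_const, card_univ, smul_eq_mul]
  have := G.degree_lt_card_verts v
  rw [degree_compl]
  omega

end SimpleGraph

instance compMM.instDecidableRelAdj (n : ℕ) : DecidableRel (compMM n).Adj :=
  fun i j => inferInstanceAs (Decidable ((i : ℕ) / 2 ≠ (j : ℕ) / 2))

theorem compMM_compl_isRegularOfDegree_one {n : ℕ} (hn : Even n) :
    (compMM n)ᶜ.IsRegularOfDegree 1 := by
  intro i
  rw [SimpleGraph.degree_eq_one_iff_existsUnique_adj]
  obtain ⟨m, rfl⟩ := hn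
  have hi := i.isLt
  refine ⟨⟨if (i : ℕ) % 2 = 0 then i + 1 else i - 1, by split <;> omega⟩, ?_, ?_⟩
  · simp only [SimpleGraph.compl_adj, compMM, ne_eq, Fin.ext_iff, not_not]
    split <;> omega
  · intro j
    simp only [SimpleGraph.compl_adj, compMM, ne_eq, Fin.ext_iff, not_not]
    have := j.isLt
    split <;> omega

theorem nonempty_iso_compMM_iff {V : Type*} [Fintype V] [DecidableEq V] {G : SimpleGraph V}
    [DecidableRel G.Adj] {n : ℕ} (hn : Even n) (hcard : Fintype.card V = n) :
    Nonempty (G ≃g compMM n) ↔ Gᶜ.IsRegularOfDegree 1 := by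
  refine ⟨fun ⟨e⟩ v => ?_, fun h => ?_⟩
  · rw [← e.compl.degree_eq]
    exact compMM_compl_isRegularOfDegree_one hn (e v)
  · rw [← SimpleGraph.nonempty_iso_compl_iff]
    exact SimpleGraph.nonempty_iso_of_isRegularOfDegree_one (by simp [hcard]) h
      (compMM_compl_isRegularOfDegree_one hn)

theorem VertexStable.not_inducesNoIsolated_compl {V : Type*} [Fintype V] [DecidableEq V]
    {G : SimpleGraph V} {r k : ℕ} (hstab : VertexStable (starG r) k G)
    (hcard : Fintype.card V = r + k + 1) {S : Finset V}
    (hS : #S = r + 1) : ¬ Gᶜ.InducesNoIsolated S := by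
  intro hno
  obtain ⟨f, hfinj, hfS, hfadj⟩ := hstab Sᶜ (by rw [card_compl, hcard, hS]; omega)
  have himage : univ.image f = S := by
    refine eq_of_subset_of_card_le (fun x hx => ?_) ?_
    · obtain ⟨a, -, rfl⟩ := mem_image.mp hx
      simpa using hfS a
    · rw [card_image_of_injective _ hfinj, card_univ, Fintype.card_option, Fintype.card_fin, hS]
  obtain ⟨w, hw, hcw⟩ := hno (f none) (himage ▸ mem_image_of_mem f (mem_univ none))
  obtain ⟨a, -, rfl⟩ := mem_image.mp (himage.symm ▸ hw)
  rw [SimpleGraph.compl_adj] at hcw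
  exact hcw.2 (hfadj none a ⟨fun h => hcw.1 (congrArg f h), Or.inl rfl⟩)

theorem stmt_14 {V : Type*} [Fintype V] (G : SimpleGraph V) (r k : ℕ)
    (hr : 4 ≤ r) (hre : Even r) (hk : k = (r - 1) ^ 2)
    (hcard : Fintype.card V = r + k + 1)
    (hstab : VertexStable (starG r) k G) :
    (r + k) ^ 2 - 1 ≤ 2 * G.edgeSet.ncard ∧
      (2 * G.edgeSet.ncard = (r + k) ^ 2 - 1 ↔
        Nonempty (G ≃g compMM (r + k + 1))) := by
  classical
  have hkodd : Odd k := hk ▸ (Nat.Even.sub_odd (by omega) hre odd_one).pow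
  have hsmall : (r + 1 - 1) * (r + 1 - 2) < Fintype.card V := by
    rw [hcard, hk, Nat.add_sub_cancel, show r + 1 - 2 = r - 1 by omega]
    obtain ⟨t, rfl⟩ : ∃ t, r = t + 1 := ⟨r - 1, by omega⟩
    rw [Nat.add_sub_cancel]
    nlinarith
  obtain ⟨hle, hiff⟩ := Gᶜ.sum_degree_le_card_of_forall_not_inducesNoIsolated hre.add_one
    (by omega) hsmall fun S hS => hstab.not_inducesNoIsolated_compl hcard hS
  have hsum := G.sum_degree_add_sum_degree_compl
  rw [nonempty_iso_compMM_iff ((hre.add_odd hkodd).add_one) hcard, ← hiff,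
    ← SimpleGraph.coe_edgeFinset, Set.ncard_coe_finset,
    ← SimpleGraph.sum_degrees_eq_twice_card_edges]
  rw [hcard] at hsum hle ⊢
  have hsq : (r + k + 1) * (r + k + 1 - 1) = (r + k) ^ 2 - 1 + (r + k + 1) := by
    have h1 : 1 ≤ (r + k) ^ 2 := Nat.one_le_pow _ _ (by omega)
    rw [Nat.add_sub_cancel]
    zify [h1]
    ring
  omega
end

section
/- Let r ≥ 4 be even and let k > (r−1)² be even. If G is a (K_{1,r}; k)-vertex stable graph of order r+k+1, then |E(G)| ≥ (1/2)(r+k)². -/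
/-!
Taking `F` to be the complement of an `(r+1)`-set `S`, stability says that some vertex of `S`
is adjacent in `G` to all the others; so no `(r+1)`-set is isolate-free in the complement `H`.
If `2|E(G)| < (r+k)²`, parity gives `2|E(H)| ≥ r+k+2 > r(r-1)`. Then `H` has a vertex of degree
two, giving an isolate-free triple, and an isolate-free set `S` with `|S| < r` can always be
enlarged by two vertices: otherwise every edge of `H` lies within `|S|+1` vertices. Since `r+1`
is odd, this produces an isolate-free `(r+1)`-set.
-/

open Finset

namespace SimpleGraph

variable {V : Type*}

def IsIsolateFree (H : SimpleGraph V) (S : Finset V) : Prop :=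
  ∀ v ∈ S, ∃ u ∈ S, H.Adj v u

section IsolateFree

variable {H : SimpleGraph V} {S T : Finset V}

theorem isIsolateFree_pair [DecidableEq V] {x y : V} (h : H.Adj x y) :
    H.IsIsolateFree {x, y} := by
  intro v hv
  simp only [mem_insert, mem_singleton] at hv
  rcases hv with rfl | rfl
  · exact ⟨y, by simp, h⟩
  · exact ⟨x, by simp, h.symm⟩

theorem IsIsolateFree.union [DecidableEq V] (hS : H.IsIsolateFree S) (hT : H.IsIsolateFree T) :
    H.IsIsolateFree (S ∪ T) := by
  intro v hv
  rcases mem_union.mp hv with hv | hv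
  · obtain ⟨u, hu, huv⟩ := hS v hv
    exact ⟨u, mem_union_left T hu, huv⟩
  · obtain ⟨u, hu, huv⟩ := hT v hv
    exact ⟨u, mem_union_right S hu, huv⟩

theorem IsIsolateFree.insert_of_adj [DecidableEq V] (hS : H.IsIsolateFree S) {u w : V}
    (hu : u ∈ S) (hwu : H.Adj w u) : H.IsIsolateFree (insert w S) := by
  intro v hv
  rcases mem_insert.mp hv with rfl | hv
  · exact ⟨u, mem_insert_of_mem hu, hwu⟩
  · obtain ⟨u', hu', hvu'⟩ := hS v hv
    exact ⟨u', mem_insert_of_mem hu', hvu'⟩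

end IsolateFree

section Counting

variable [Fintype V] (H : SimpleGraph V) [DecidableRel H.Adj]

theorem exists_two_le_degree (h : Fintype.card V < 2 * #H.edgeFinset) :
    ∃ v, 2 ≤ H.degree v := by
  by_contra! hdeg
  have : ∑ v, H.degree v ≤ Fintype.card V * 1 :=
    sum_le_card_nsmul _ _ 1 fun v _ => Nat.le_of_lt_succ (hdeg v)
  rw [sum_degrees_eq_twice_card_edges] at this
  omega

variable [DecidableEq V]

theorem card_edgeFinset_add_card_edgeFinset_compl :
    #H.edgeFinset + #Hᶜ.edgeFinset = (Fintype.card V).choose 2 := by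
  rw [← card_edgeFinset_top_eq_card_choose_two,
    ← card_union_of_disjoint (disjoint_edgeFinset.mpr disjoint_compl_right), ← edgeFinset_sup]
  congr!
  exact sup_compl_eq_top

theorem card_edgeFinset_le_choose_two_of_support_subset {W : Finset V} (h : H.support ⊆ W) :
    #H.edgeFinset ≤ (#W).choose 2 := by
  rw [← card_edgeFinset_induce_of_support_subset h]
  convert card_edgeFinset_le_card_choose_two (G := H.induce (W : Set V)) using 2
  · simp
  · simp only [coe_sort_coe, Fintype.card_coe]

variable {H}

theorem IsIsolateFree.exists_card_add_two {S : Finset V} (hS : H.IsIsolateFree S)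
    (hE : (#S + 1).choose 2 < #H.edgeFinset) :
    ∃ T, H.IsIsolateFree T ∧ #T = #S + 2 := by
  by_cases hout : ∃ x y, H.Adj x y ∧ x ∉ S ∧ y ∉ S
  · obtain ⟨x, y, hxy, hx, hy⟩ := hout
    refine ⟨{x, y} ∪ S, (isIsolateFree_pair hxy).union hS, ?_⟩
    rw [card_union_of_disjoint (by simp [hx, hy]), card_pair hxy.ne, add_comm]
  push Not at hout
  set A := {w ∈ (univ : Finset V) | w ∉ S ∧ ∃ u ∈ S, H.Adj w u}
  by_cases hA : 2 ≤ #A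
  · obtain ⟨w₁, hw₁, w₂, hw₂, hne⟩ := one_lt_card.mp hA
    obtain ⟨-, hw₁S, u₁, hu₁, hadj₁⟩ := mem_filter.mp hw₁
    obtain ⟨-, hw₂S, u₂, hu₂, hadj₂⟩ := mem_filter.mp hw₂
    refine ⟨insert w₁ (insert w₂ S),
      (hS.insert_of_adj hu₂ hadj₂).insert_of_adj (mem_insert_of_mem hu₁) hadj₁, ?_⟩
    rw [card_insert_of_notMem (by simp [hne, hw₁S]), card_insert_of_notMem hw₂S]
  -- Now every edge lies inside `S ∪ A`, which has at most `#S + 1` vertices.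
  have hsupp : H.support ⊆ ↑(S ∪ A) := by
    rintro p ⟨q, hpq⟩
    by_cases hpS : p ∈ S
    · simp [hpS]
    · simpa [A, hpS] using ⟨q, hout p q hpq hpS, hpq⟩
  have hcard : #(S ∪ A) ≤ #S + 1 := (card_union_le S A).trans (by omega)
  have := (card_edgeFinset_le_choose_two_of_support_subset H hsupp).trans
    (Nat.choose_le_choose 2 hcard)
  omega

theorem exists_isIsolateFree_card_eq_two_mul_add_three {v : V} (hv : 2 ≤ H.degree v) (j : ℕ)
    (hE : (2 * j + 2).choose 2 < #H.edgeFinset) :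
    ∃ S, H.IsIsolateFree S ∧ #S = 2 * j + 3 := by
  induction j with
  | zero =>
    obtain ⟨a, ha, b, hb, hab⟩ := one_lt_card.mp
      (by rwa [card_neighborFinset_eq_degree] : 1 < #(H.neighborFinset v))
    rw [mem_neighborFinset] at ha hb
    refine ⟨{b, v, a}, ((isIsolateFree_pair ha).insert_of_adj (by simp) hb.symm), ?_⟩
    exact card_eq_three.mpr ⟨b, v, a, hb.ne', hab.symm, ha.ne, rfl⟩
  | succ j ih =>
    have hE' : (2 * j + 2).choose 2 < #H.edgeFinset :=
      (Nat.choose_le_choose 2 (by omega)).trans_lt hE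
    obtain ⟨S, hS, hcard⟩ := ih hE'
    obtain ⟨T, hT, hTcard⟩ := hS.exists_card_add_two (by rwa [hcard])
    exact ⟨T, hT, by omega⟩

end Counting

end SimpleGraph

theorem VertexStable.not_isIsolateFree_compl {V : Type*} [Fintype V] [DecidableEq V]
    {G : SimpleGraph V} {r k : ℕ} (hG : VertexStable (starG r) k G)
    (hcard : Fintype.card V = r + k + 1) {S : Finset V} (hS : #S = r + 1) :
    ¬ Gᶜ.IsIsolateFree S := by
  obtain ⟨f, hf, hfS, hadj⟩ := hG Sᶜ (by rw [card_compl, hcard, hS]; omega)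
  replace hfS : ∀ a, f a ∈ S := fun a => by simpa using hfS a
  have himage : univ.image f = S := eq_of_subset_of_card_le
    (image_subset_iff.mpr fun a _ => hfS a) (by simp [card_image_of_injective _ hf, hS])
  intro hfree
  obtain ⟨u, hu, hcu⟩ := hfree (f none) (hfS none)
  obtain ⟨a, -, rfl⟩ := mem_image.mp (himage ▸ hu)
  exact ((SimpleGraph.compl_adj _ _ _).mp hcu).2
    (hadj none a ⟨fun h => hcu.ne (h ▸ rfl), Or.inl rfl⟩)

theorem stmt_15 {V : Type*} [Fintype V] (G : SimpleGraph V) (r k : ℕ)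
    (hr : 4 ≤ r) (hre : Even r) (hke : Even k) (hk : (r - 1) ^ 2 < k)
    (hcard : Fintype.card V = r + k + 1)
    (hstab : VertexStable (starG r) k G) :
    (r + k) ^ 2 ≤ 2 * G.edgeSet.ncard := by
  classical
  by_contra! hlt
  rw [← G.coe_edgeFinset, Set.ncard_coe_finset] at hlt
  obtain ⟨m, hm⟩ := hre
  obtain ⟨d, hd⟩ := hke
  have two_mul_choose : ∀ n, 2 * (n + 1).choose 2 = (n + 1) * n := fun n => by
    rw [mul_comm 2, ← Nat.add_one_mul_choose_eq, Nat.choose_one_right]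
  have htotal : 2 * #G.edgeFinset + 2 * #Gᶜ.edgeFinset = (r + k) ^ 2 + (r + k) := by
    rw [← mul_add, G.card_edgeFinset_add_card_edgeFinset_compl, hcard, two_mul_choose]; ring
  have hr2 : 2 * r.choose 2 = (r - 1) ^ 2 + (r - 1) := by
    obtain ⟨s, rfl⟩ : ∃ s, r = s + 1 := ⟨r - 1, by omega⟩
    rw [two_mul_choose, Nat.add_sub_cancel]; ring
  have hE : r.choose 2 < #Gᶜ.edgeFinset := by omega
  obtain ⟨v, hv⟩ := Gᶜ.exists_two_le_degree (by omega)
  obtain ⟨S, hS, hScard⟩ := SimpleGraph.exists_isIsolateFree_card_eq_two_mul_add_three hv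
    (r / 2 - 1) (by rwa [show 2 * (r / 2 - 1) + 2 = r by omega])
  exact hstab.not_isIsolateFree_compl hcard (by omega) hS
end
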